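/- Let k ≥ 1 and let x_1, …, x_k be real numbers satisfying: x_1 > 0; x_i ≥ 0 for all i ∈ {1, …, k}; and x_i ≤ 2·max_{j ∈ {1, …, i−1}} x_j for all i ∈ {2, …, k}. Then (∑_{i=1}^{k} i·2^{-i}·x_i) / (∑_{i=1}^{k} 2^{-i}·x_i) ≤ 3k/4 + 1/2. -/

import Mathlib

/-!
Write `S n = ∑_{i ≤ n} 2^{-i} x_i`. Every weight seen so far is controlled by the current mass,
`n 2^{-n} x_j ≤ S n` for `j ≤ n`: going from `n` to `n + 1` halves `2^{-n}`, while the new term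
`x_{n+1}` is at most twice an earlier one. Hence the next weight `w = 2^{-(n+1)} x_{n+1}` satisfies
`n w ≤ S n`, which is exactly what the induction step for `moment ≤ (3n/4 + 1/2) S` needs: adding `w`
raises the moment by `(n + 1) w` and the bound by `(3/4) S n + (3n/4 + 5/4) w`.
-/

open Finset

noncomputable def dyadicMass (x : ℕ → ℝ) (n : ℕ) : ℝ :=
  ∑ i ∈ Icc 1 n, (2 : ℝ) ^ (-(i : ℤ)) * x i

noncomputable def dyadicMoment (x : ℕ → ℝ) (n : ℕ) : ℝ :=
  ∑ i ∈ Icc 1 n, (i : ℝ) * (2 : ℝ) ^ (-(i : ℤ)) * x i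

lemma two_zpow_neg_natCast_succ (n : ℕ) :
    (2 : ℝ) ^ (-((n + 1 : ℕ) : ℤ)) = 2 ^ (-(n : ℤ)) / 2 := by
  rw [Nat.cast_succ, neg_add, zpow_add₀ two_ne_zero, zpow_neg_one, div_eq_mul_inv]

lemma dyadicMass_succ (x : ℕ → ℝ) (n : ℕ) :
    dyadicMass x (n + 1) = dyadicMass x n + 2 ^ (-(n : ℤ)) / 2 * x (n + 1) := by
  rw [dyadicMass, sum_Icc_succ_top (by omega), two_zpow_neg_natCast_succ, dyadicMass]

lemma dyadicMoment_succ (x : ℕ → ℝ) (n : ℕ) :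
    dyadicMoment x (n + 1) =
      dyadicMoment x n + (n + 1) * (2 ^ (-(n : ℤ)) / 2) * x (n + 1) := by
  rw [dyadicMoment, sum_Icc_succ_top (by omega), two_zpow_neg_natCast_succ, dyadicMoment,
    Nat.cast_succ]

lemma dyadicMass_nonneg {k : ℕ} {x : ℕ → ℝ} (hx0 : ∀ i ∈ Icc 1 k, 0 ≤ x i) {n : ℕ}
    (hn : n ≤ k) : 0 ≤ dyadicMass x n :=
  sum_nonneg fun i hi => mul_nonneg (by positivity) (hx0 i (Icc_subset_Icc_right hn hi))

lemma natCast_mul_dyadicWeight_succ_le {k : ℕ} {x : ℕ → ℝ}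
    (hgrowth : ∀ n, 1 ≤ n → n < k → ∃ m ∈ Icc 1 n, x (n + 1) ≤ 2 * x m) {n : ℕ} (hn : n < k)
    (hprev : ∀ j ∈ Icc 1 n, n * 2 ^ (-(n : ℤ)) * x j ≤ dyadicMass x n) :
    n * (2 ^ (-(n : ℤ)) / 2 * x (n + 1)) ≤ dyadicMass x n := by
  rcases Nat.eq_zero_or_pos n with rfl | hpos
  · simp [dyadicMass]
  obtain ⟨m, hm, hxm⟩ := hgrowth n hpos hn
  calc (n : ℝ) * (2 ^ (-(n : ℤ)) / 2 * x (n + 1))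
      ≤ n * (2 ^ (-(n : ℤ)) / 2 * (2 * x m)) := by gcongr
    _ = n * 2 ^ (-(n : ℤ)) * x m := by ring
    _ ≤ dyadicMass x n := hprev m hm

section

variable {k : ℕ} {x : ℕ → ℝ} (hx0 : ∀ i ∈ Icc 1 k, 0 ≤ x i)
  (hgrowth : ∀ n, 1 ≤ n → n < k → ∃ m ∈ Icc 1 n, x (n + 1) ≤ 2 * x m)
include hx0 hgrowth

lemma natCast_mul_dyadicWeight_le {n : ℕ} (hn : n ≤ k) :
    ∀ j ∈ Icc 1 n, n * 2 ^ (-(n : ℤ)) * x j ≤ dyadicMass x n := by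
  induction n with
  | zero => simp
  | succ n ih =>
    have hnew := natCast_mul_dyadicWeight_succ_le hgrowth hn (ih (by omega))
    intro j hj
    rw [dyadicMass_succ, two_zpow_neg_natCast_succ]
    push_cast
    rcases (mem_Icc.1 hj).2.eq_or_lt with rfl | hjn
    · linarith
    · have hj' : j ∈ Icc 1 n := mem_Icc.2 ⟨(mem_Icc.1 hj).1, by omega⟩
      have hn1 : (0 : ℝ) ≤ n - 1 := by
        rw [sub_nonneg]
        exact_mod_cast (mem_Icc.1 hj').1.trans (mem_Icc.1 hj').2
      have hxj : 0 ≤ x j := hx0 j (Icc_subset_Icc_right (by omega) hj')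
      have hhalving : 0 ≤ ((n : ℝ) - 1) * 2 ^ (-(n : ℤ)) * x j := by positivity
      have hweight : (0 : ℝ) ≤ 2 ^ (-(n : ℤ)) / 2 * x (n + 1) :=
        mul_nonneg (by positivity) (hx0 _ (mem_Icc.2 ⟨by omega, hn⟩))
      linarith [ih (by omega) j hj']

lemma dyadicMoment_le {n : ℕ} (hn : n ≤ k) :
    dyadicMoment x n ≤ (3 * n / 4 + 1 / 2) * dyadicMass x n := by
  induction n with
  | zero => simp [dyadicMoment, dyadicMass]
  | succ n ih =>
    have hnew := natCast_mul_dyadicWeight_succ_le hgrowth hn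
      (natCast_mul_dyadicWeight_le hx0 hgrowth (by omega))
    have hmass := dyadicMass_nonneg hx0 (n := n) (by omega)
    have hweight : (0 : ℝ) ≤ 2 ^ (-(n : ℤ)) / 2 * x (n + 1) :=
      mul_nonneg (by positivity) (hx0 _ (mem_Icc.2 ⟨by omega, hn⟩))
    rw [dyadicMoment_succ, dyadicMass_succ]
    push_cast
    linarith [ih (by omega)]

end

/-- For `k ≥ 1` and reals `x_1, …, x_k` with `x_1 > 0`, `x_i ≥ 0` for all
`i ∈ {1, …, k}`, and `x_i ≤ 2·max_{j ∈ {1, …, i−1}} x_j` for `i ∈ {2, …, k}`: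
`(∑ i·2^{-i}·x_i) / (∑ 2^{-i}·x_i) ≤ 3k/4 + 1/2`. -/
theorem stmt_12 (k : ℕ) (x : ℕ → ℝ)
    (hx0 : ∀ i ∈ Finset.Icc 1 k, 0 ≤ x i)
    (hx2 : ∀ i, ∀ h2 : 2 ≤ i, i ≤ k →
      x i ≤ 2 * (Finset.Icc 1 (i - 1)).sup' (Finset.nonempty_Icc.mpr (by omega)) x) :
    (∑ i ∈ Finset.Icc 1 k, (i : ℝ) * (2 : ℝ) ^ (-(i : ℤ)) * x i) /
        (∑ i ∈ Finset.Icc 1 k, (2 : ℝ) ^ (-(i : ℤ)) * x i) ≤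
      3 * (k : ℝ) / 4 + 1 / 2 := by
  have hgrowth : ∀ n, 1 ≤ n → n < k → ∃ m ∈ Icc 1 n, x (n + 1) ≤ 2 * x m := by
    intro n hn hnk
    obtain ⟨m, hm, hmax⟩ := exists_mem_eq_sup' (nonempty_Icc.mpr hn) x
    exact ⟨m, hm, by simpa [hmax] using hx2 (n + 1) (by omega) hnk⟩
  -- no positivity of the denominator is needed: `a / 0 = 0`
  exact div_le_of_le_mul₀ (dyadicMass_nonneg hx0 le_rfl) (by positivity)
    (dyadicMoment_le hx0 hgrowth le_rfl)
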